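/- arXiv:1909.12438 — 3 statements merged into one kernel-verified Lean document; each statement's English description precedes it below -/
import Mathlib

section
/- For the symmetric tridiagonal matrix L_j defined from a positive weight function p, the quadratic form satisfies X^T L_j X ≥ Σ_{i=1}^m (p(i,j) + p(i,j-1)) x_i^2 for every X in R^m. -/
/-- lower bound for the quadratic form of the symmetric tridiagonal
matrix `L_j` built from a nonnegative weight `p`: `Xᵀ L_j X ≥ ∑ (p(i,j)+p(i,j-1)) x_i²`. -/
theorem stmt_1 (m n j : ℕ) (hm : 1 ≤ m) (hj : 1 ≤ j) (hjn : j ≤ n)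
    (p : ℕ → ℕ → ℝ) (hp : ∀ i j', 0 ≤ p i j')
    (L : ℕ → ℕ → ℝ)
    (hL : ∀ k l, L k l =
      if k = l then p (k - 1) j + 2 * p k j + p k (j - 1)
      else if l = k + 1 then -p k j
      else if k = l + 1 then -p l j
      else 0)
    (x : ℕ → ℝ) :
    ∑ k ∈ Finset.Icc 1 m, ∑ l ∈ Finset.Icc 1 m, x k * L k l * x l ≥
      ∑ i ∈ Finset.Icc 1 m, (p i j + p i (j - 1)) * x i ^ 2 := by
  have key : ∀ M, 1 ≤ M →
      ∑ k ∈ Finset.Icc 1 M, ∑ l ∈ Finset.Icc 1 M, x k * L k l * x l =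
      (∑ i ∈ Finset.Icc 1 M, (p i j + p i (j - 1)) * x i ^ 2)
        + p 0 j * x 1 ^ 2 + p M j * x M ^ 2
        + ∑ k ∈ Finset.Icc 1 (M - 1), p k j * (x k - x (k + 1)) ^ 2 := by
    intro M hM
    induction M, hM using Nat.le_induction with
    | base =>
      simp only [Finset.Icc_self, Finset.sum_singleton, hL, if_pos rfl]
      norm_num
      ring
    | succ M₀ hM ih =>
      obtain ⟨M, rfl⟩ : ∃ M, M₀ = M + 1 := ⟨M₀ - 1, by omega⟩
      have e1 : L (M + 1 + 1) (M + 1) = -(p (M + 1) j) := by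
        rw [hL, if_neg (by omega), if_neg (by omega), if_pos rfl]
      have e2 : L (M + 1 + 1) (M + 1 + 1)
          = p (M + 1) j + 2 * p (M + 1 + 1) j + p (M + 1 + 1) (j - 1) := by
        rw [hL, if_pos rfl]
        simp
      have e3 : L (M + 1) (M + 1 + 1) = -(p (M + 1) j) := by
        rw [hL, if_neg (by omega), if_pos rfl]
      rw [Finset.sum_Icc_succ_top (by omega : 1 ≤ M + 1 + 1)]
      have hinner : ∀ k ∈ Finset.Icc 1 (M + 1),
          ∑ l ∈ Finset.Icc 1 (M + 1 + 1), x k * L k l * x l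
          = (∑ l ∈ Finset.Icc 1 (M + 1), x k * L k l * x l)
            + x k * L k (M + 1 + 1) * x (M + 1 + 1) :=
        fun k _ => Finset.sum_Icc_succ_top (by omega) _
      rw [Finset.sum_congr rfl hinner, Finset.sum_add_distrib]
      have hcol : ∑ k ∈ Finset.Icc 1 (M + 1), x k * L k (M + 1 + 1) * x (M + 1 + 1)
          = x (M + 1) * (-(p (M + 1) j)) * x (M + 1 + 1) := by
        rw [Finset.sum_eq_single_of_mem (M + 1) (by simp [Finset.mem_Icc]), e3]
        intro b hb hne
        simp only [Finset.mem_Icc] at hb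
        rw [hL, if_neg (by omega), if_neg (by omega), if_neg (by omega)]
        ring
      have hrow : ∑ l ∈ Finset.Icc 1 (M + 1 + 1), x (M + 1 + 1) * L (M + 1 + 1) l * x l
          = x (M + 1 + 1) * (-(p (M + 1) j)) * x (M + 1)
            + x (M + 1 + 1) * (p (M + 1) j + 2 * p (M + 1 + 1) j + p (M + 1 + 1) (j - 1))
              * x (M + 1 + 1) := by
        rw [Finset.sum_Icc_succ_top (by omega : 1 ≤ M + 1 + 1), e2]
        congr 1
        rw [Finset.sum_eq_single_of_mem (M + 1) (by simp [Finset.mem_Icc]), e1]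
        intro b hb hne
        simp only [Finset.mem_Icc] at hb
        rw [hL, if_neg (by omega), if_neg (by omega), if_neg (by omega)]
        ring
      rw [hcol, hrow, ih]
      have hsum : ∑ i ∈ Finset.Icc 1 (M + 1 + 1), (p i j + p i (j - 1)) * x i ^ 2
          = (∑ i ∈ Finset.Icc 1 (M + 1), (p i j + p i (j - 1)) * x i ^ 2)
            + (p (M + 1 + 1) j + p (M + 1 + 1) (j - 1)) * x (M + 1 + 1) ^ 2 :=
        Finset.sum_Icc_succ_top (by omega) _
      rw [hsum]
      have hsq : ∑ k ∈ Finset.Icc 1 (M + 1 + 1 - 1), p k j * (x k - x (k + 1)) ^ 2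
          = (∑ k ∈ Finset.Icc 1 (M + 1 - 1), p k j * (x k - x (k + 1)) ^ 2)
            + p (M + 1) j * (x (M + 1) - x (M + 1 + 1)) ^ 2 := by
        simp only [Nat.add_sub_cancel]
        rw [Finset.sum_Icc_succ_top (by omega : 1 ≤ M + 1)]
      rw [hsq]
      ring
  rw [key m hm]
  have h1 : 0 ≤ p 0 j * x 1 ^ 2 := mul_nonneg (hp _ _) (sq_nonneg _)
  have h2 : 0 ≤ p m j * x m ^ 2 := mul_nonneg (hp _ _) (sq_nonneg _)
  have h3 : 0 ≤ ∑ k ∈ Finset.Icc 1 (m - 1), p k j * (x k - x (k + 1)) ^ 2 :=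
    Finset.sum_nonneg fun k _ => mul_nonneg (hp _ _) (sq_nonneg _)
  linarith
end

section
/- The block tridiagonal mn×mn matrix M, with diagonal blocks L_j (the symmetric tridiagonal matrices built from the weight p) and off-diagonal blocks -P_j (diagonal matrices with entries p(i,j)), satisfies X^T M X ≥ Σ_{j=1}^{n-1} Σ_{i=1}^m p(i,j)(x_{i,j} - x_{i,j+1})^2 + Σ_{i=1}^m p(i,n) x_{i,n}^2 for every X in R^{mn}, provided p(i,0) = 0 for all i in [1,m]_Z. -/
lemma telescope1 (m : ℕ) (hm : 1 ≤ m) (q z : ℕ → ℝ) :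
    ∑ i ∈ Finset.Icc 1 m, z i * (q (i-1) * (z i - z (i-1)) + q i * (z i - z (i+1)))
      = (∑ i ∈ Finset.Icc 1 (m-1), q i * (z i - z (i+1))^2)
        + q 0 * z 1 * (z 1 - z 0) + q m * z m * (z m - z (m+1)) := by
  induction m, hm using Nat.le_induction with
  | base => simp; ring
  | succ m hm ih =>
    obtain ⟨m', rfl⟩ : ∃ m', m = m' + 1 := ⟨m-1, by omega⟩
    rw [Finset.sum_Icc_succ_top (by omega), ih]
    simp only [Nat.add_sub_cancel]
    rw [Finset.sum_Icc_succ_top (by omega)]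
    ring

lemma collapse2 (s t : Finset ℕ) (a b : ℕ) (c : ℝ) :
    ∑ l ∈ t, ∑ k ∈ s, (if k = a ∧ l = b then c else 0)
      = if a ∈ s ∧ b ∈ t then c else 0 := by
  simp only [ite_and]
  rw [Finset.sum_comm]
  rw [show (∑ y ∈ s, ∑ x ∈ t, if y = a then if x = b then c else 0 else 0)
      = ∑ y ∈ s, if y = a then ∑ x ∈ t, if x = b then c else 0 else 0 from
    Finset.sum_congr rfl fun y _ => by split_ifs <;> simp]
  rw [Finset.sum_ite_eq' s a (fun _ => ∑ x ∈ t, if x = b then c else 0)]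
  by_cases ha : a ∈ s <;> by_cases hb : b ∈ t <;>
    simp [ha, hb, Finset.sum_ite_eq']


set_option maxHeartbeats 2000000 in


/-- lower bound for the quadratic form of the block tridiagonal matrix `M`
(with diagonal blocks `L_j` and off-diagonal blocks `-P_j`), assuming `p(i,0) = 0`.
`Mat i j' k l` is the entry of `M` coupling the unknowns `x(i,j')` and `x(k,l)`. -/
theorem stmt_2 (m n : ℕ) (hm : 1 ≤ m) (hn : 1 ≤ n)
    (p : ℕ → ℕ → ℝ) (hp : ∀ i j', 0 ≤ p i j')
    (hp0 : ∀ i ∈ Finset.Icc 1 m, p i 0 = 0)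
    (Mat : ℕ → ℕ → ℕ → ℕ → ℝ)
    (hMat : ∀ i j' k l, Mat i j' k l =
      if j' = l then
        (if i = k then p (i - 1) j' + 2 * p i j' + p i (j' - 1)
         else if k = i + 1 then -p i j'
         else if i = k + 1 then -p k j'
         else 0)
      else if l = j' + 1 ∧ i = k then -p i j'
      else if j' = l + 1 ∧ i = k then -p i l
      else 0)
    (x : ℕ → ℕ → ℝ) :
    ∑ j' ∈ Finset.Icc 1 n, ∑ l ∈ Finset.Icc 1 n, ∑ i ∈ Finset.Icc 1 m,
        ∑ k ∈ Finset.Icc 1 m, x i j' * Mat i j' k l * x k l ≥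
      (∑ j' ∈ Finset.Icc 1 (n - 1), ∑ i ∈ Finset.Icc 1 m,
          p i j' * (x i j' - x i (j' + 1)) ^ 2)
      + ∑ i ∈ Finset.Icc 1 m, p i n * (x i n) ^ 2 := by
  set y : ℕ → ℕ → ℝ := fun a b =>
    if (1 ≤ a ∧ a ≤ m) ∧ 1 ≤ b ∧ b ≤ n then x a b else 0 with hy
  have key : ∀ i ∈ Finset.Icc 1 m, ∀ j' ∈ Finset.Icc 1 n,
      ∑ l ∈ Finset.Icc 1 n, ∑ k ∈ Finset.Icc 1 m, x i j' * Mat i j' k l * x k l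
      = y i j' * (p (i-1) j' * (y i j' - y (i-1) j') + p i j' * (y i j' - y (i+1) j'))
      + y i j' * (p i (j'-1) * (y i j' - y i (j'-1)) + p i j' * (y i j' - y i (j'+1))) := by
    intro i hi j' hj
    simp only [Finset.mem_Icc] at hi hj
    obtain ⟨hi1, hi2⟩ := hi
    obtain ⟨hj1, hj2⟩ := hj
    have step : ∀ l ∈ Finset.Icc 1 n, ∀ k ∈ Finset.Icc 1 m,
        x i j' * Mat i j' k l * x k l =
          (if k = i ∧ l = j' then
            x i j' * ((p (i-1) j' + 2*p i j' + p i (j'-1)) * x i j') else 0)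
        + (if k = i+1 ∧ l = j' then x i j' * (-(p i j') * x (i+1) j') else 0)
        + (if k = i-1 ∧ l = j' then x i j' * (-(p (i-1) j') * x (i-1) j') else 0)
        + (if k = i ∧ l = j'+1 then x i j' * (-(p i j') * x i (j'+1)) else 0)
        + (if k = i ∧ l = j'-1 then x i j' * (-(p i (j'-1)) * x i (j'-1)) else 0) := by
      intro l hl k hk
      simp only [Finset.mem_Icc] at hl hk
      rw [hMat]
      split_ifs <;>
        first
          | omega
          | (casesm* _ ∧ _ <;> subst_vars <;>
              (try simp only [Nat.add_sub_cancel, Nat.add_sub_cancel_left, Nat.add_comm 1]) <;>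
              first | ring | omega)
          | (subst_vars <;>
              (try simp only [Nat.add_sub_cancel, Nat.add_sub_cancel_left, Nat.add_comm 1]) <;>
              first | ring | omega)
    rw [Finset.sum_congr rfl fun l hl => Finset.sum_congr rfl fun k hk => step l hl k hk]
    simp only [Finset.sum_add_distrib, collapse2, Finset.mem_Icc]
    have hxy : x i j' = y i j' := by simp only [hy]; rw [if_pos ⟨⟨hi1, hi2⟩, hj1, hj2⟩]
    have e1 : (if (1 ≤ i ∧ i ≤ m) ∧ 1 ≤ j' ∧ j' ≤ n then
        x i j' * ((p (i-1) j' + 2*p i j' + p i (j'-1)) * x i j') else 0)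
        = x i j' * ((p (i-1) j' + 2*p i j' + p i (j'-1)) * x i j') := by
      rw [if_pos ⟨⟨hi1, hi2⟩, hj1, hj2⟩]
    have e2 : (if (1 ≤ i+1 ∧ i+1 ≤ m) ∧ 1 ≤ j' ∧ j' ≤ n then
        x i j' * (-(p i j') * x (i+1) j') else 0)
        = x i j' * (-(p i j') * y (i+1) j') := by
      simp only [hy]; split_ifs <;> first | ring | omega | tauto
    have e3 : (if (1 ≤ i-1 ∧ i-1 ≤ m) ∧ 1 ≤ j' ∧ j' ≤ n then
        x i j' * (-(p (i-1) j') * x (i-1) j') else 0)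
        = x i j' * (-(p (i-1) j') * y (i-1) j') := by
      simp only [hy]; split_ifs <;> first | ring | omega | tauto
    have e4 : (if (1 ≤ i ∧ i ≤ m) ∧ 1 ≤ j'+1 ∧ j'+1 ≤ n then
        x i j' * (-(p i j') * x i (j'+1)) else 0)
        = x i j' * (-(p i j') * y i (j'+1)) := by
      simp only [hy]; split_ifs <;> first | ring | omega | tauto
    have e5 : (if (1 ≤ i ∧ i ≤ m) ∧ 1 ≤ j'-1 ∧ j'-1 ≤ n then
        x i j' * (-(p i (j'-1)) * x i (j'-1)) else 0)
        = x i j' * (-(p i (j'-1)) * y i (j'-1)) := by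
      simp only [hy]; split_ifs <;> first | ring | omega | tauto
    rw [e1, e2, e3, e4, e5, hxy]
    ring
  have lhs_eq : ∑ j' ∈ Finset.Icc 1 n, ∑ l ∈ Finset.Icc 1 n, ∑ i ∈ Finset.Icc 1 m,
        ∑ k ∈ Finset.Icc 1 m, x i j' * Mat i j' k l * x k l
      = (∑ j' ∈ Finset.Icc 1 n, ∑ i ∈ Finset.Icc 1 m,
          y i j' * (p (i-1) j' * (y i j' - y (i-1) j') + p i j' * (y i j' - y (i+1) j')))
      + ∑ i ∈ Finset.Icc 1 m, ∑ j' ∈ Finset.Icc 1 n,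
          y i j' * (p i (j'-1) * (y i j' - y i (j'-1)) + p i j' * (y i j' - y i (j'+1))) := by
    calc ∑ j' ∈ Finset.Icc 1 n, ∑ l ∈ Finset.Icc 1 n, ∑ i ∈ Finset.Icc 1 m,
          ∑ k ∈ Finset.Icc 1 m, x i j' * Mat i j' k l * x k l
        = ∑ j' ∈ Finset.Icc 1 n, ∑ i ∈ Finset.Icc 1 m,
            (y i j' * (p (i-1) j' * (y i j' - y (i-1) j') + p i j' * (y i j' - y (i+1) j'))
            + y i j' * (p i (j'-1) * (y i j' - y i (j'-1)) + p i j' * (y i j' - y i (j'+1)))) := by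
          refine Finset.sum_congr rfl fun j' hj => ?_
          rw [Finset.sum_comm]
          exact Finset.sum_congr rfl fun i hi => key i hi j' hj
      _ = _ := by
          simp only [Finset.sum_add_distrib]
          congr 1
          rw [Finset.sum_comm]
  rw [lhs_eq]
  -- horizontal part is nonnegative
  have hH : 0 ≤ ∑ j' ∈ Finset.Icc 1 n, ∑ i ∈ Finset.Icc 1 m,
      y i j' * (p (i-1) j' * (y i j' - y (i-1) j') + p i j' * (y i j' - y (i+1) j')) := by
    refine Finset.sum_nonneg fun j' hj => ?_
    rw [telescope1 m hm (fun i => p i j') (fun i => y i j')]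
    have hy0 : y 0 j' = 0 := by simp [hy]
    have hym : y (m+1) j' = 0 := by simp only [hy]; rw [if_neg (by omega)]
    rw [hy0, hym]
    have t1 : 0 ≤ ∑ i ∈ Finset.Icc 1 (m-1), p i j' * (y i j' - y (i+1) j')^2 :=
      Finset.sum_nonneg fun i _ => mul_nonneg (hp _ _) (sq_nonneg _)
    nlinarith [hp 0 j', hp m j', sq_nonneg (y 1 j'), sq_nonneg (y m j'),
      mul_nonneg (hp 0 j') (sq_nonneg (y 1 j')), mul_nonneg (hp m j') (sq_nonneg (y m j'))]
  -- vertical part equals the RHS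
  have hV : ∑ i ∈ Finset.Icc 1 m, ∑ j' ∈ Finset.Icc 1 n,
        y i j' * (p i (j'-1) * (y i j' - y i (j'-1)) + p i j' * (y i j' - y i (j'+1)))
      = (∑ j' ∈ Finset.Icc 1 (n - 1), ∑ i ∈ Finset.Icc 1 m,
          p i j' * (x i j' - x i (j' + 1)) ^ 2)
      + ∑ i ∈ Finset.Icc 1 m, p i n * (x i n) ^ 2 := by
    have : ∀ i ∈ Finset.Icc 1 m,
        ∑ j' ∈ Finset.Icc 1 n,
          y i j' * (p i (j'-1) * (y i j' - y i (j'-1)) + p i j' * (y i j' - y i (j'+1)))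
        = (∑ j' ∈ Finset.Icc 1 (n-1), p i j' * (x i j' - x i (j'+1))^2)
          + p i n * (x i n)^2 := by
      intro i hi
      simp only [Finset.mem_Icc] at hi
      rw [telescope1 n hn (fun j => p i j) (fun j => y i j)]
      have hy0 : y i 0 = 0 := by simp [hy]
      have hyn : y i (n+1) = 0 := by simp only [hy]; rw [if_neg (by omega)]
      have hynn : y i n = x i n := by simp only [hy]; rw [if_pos (by omega)]
      have hp0' : p i 0 = 0 := hp0 i (Finset.mem_Icc.mpr hi)
      rw [hy0, hyn, hynn, hp0']
      have hsum : ∑ j' ∈ Finset.Icc 1 (n-1), p i j' * (y i j' - y i (j'+1))^2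
          = ∑ j' ∈ Finset.Icc 1 (n-1), p i j' * (x i j' - x i (j'+1))^2 := by
        refine Finset.sum_congr rfl fun j' hj => ?_
        simp only [Finset.mem_Icc] at hj
        have h1 : y i j' = x i j' := by simp only [hy]; rw [if_pos (by omega)]
        have h2 : y i (j'+1) = x i (j'+1) := by simp only [hy]; rw [if_pos (by omega)]
        rw [h1, h2]
      rw [hsum]
      ring
    rw [Finset.sum_congr rfl this, Finset.sum_add_distrib, Finset.sum_comm]
  rw [hV]
  linarith
end

section
/- The block tridiagonal matrix M arising from the discrete elliptic problem with a strictly positive weight p on [1,m]_Z × [1,n]_Z (and with p(0,j) = 0 for j ∈ [1,n]_Z and p(i,0) = 0 for i ∈ [1,m]_Z) is positive definite: X^T M X > 0 for all nonzero X in R^{mn}. -/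
/-- 1D summation-by-parts identity used for each row/column. -/
lemma oneD_sq (m : ℕ) (f y : ℕ → ℝ) (hf0 : f 0 = 0) (hym : y (m + 1) = 0) :
    ∑ i ∈ Finset.Icc 1 m,
        ((f (i - 1) + f i) * y i ^ 2 - f i * y i * y (i + 1) - f (i - 1) * y i * y (i - 1))
      = ∑ i ∈ Finset.Icc 1 m, f i * (y (i + 1) - y i) ^ 2 := by
  rw [← sub_eq_zero, ← Finset.sum_sub_distrib, ← Finset.Ico_add_one_right_eq_Icc,
    Finset.sum_Ico_eq_sum_range]
  have h : ∀ i ∈ Finset.range (m + 1 - 1),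
      ((f (1 + i - 1) + f (1 + i)) * y (1 + i) ^ 2 - f (1 + i) * y (1 + i) * y (1 + i + 1)
          - f (1 + i - 1) * y (1 + i) * y (1 + i - 1))
        - f (1 + i) * (y (1 + i + 1) - y (1 + i)) ^ 2
      = (f (i + 1) * (y (i + 1 + 1) * y (i + 1)) - f i * (y (i + 1) * y i))
        - (f (i + 1) * y (i + 1 + 1) ^ 2 - f i * y (i + 1) ^ 2) := by
    intro i _
    have e1 : 1 + i - 1 = i := by omega
    have e2 : 1 + i + 1 = i + 1 + 1 := by omega
    have e3 : 1 + i = i + 1 := by omega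
    rw [e1, e2, e3]
    ring
  rw [Finset.sum_congr rfl h, Finset.sum_sub_distrib,
    Finset.sum_range_sub (fun i => f i * (y (i + 1) * y i)),
    Finset.sum_range_sub (fun i => f i * y (i + 1) ^ 2)]
  have e : m + 1 - 1 = m := by omega
  rw [e, hf0, hym]
  ring

/-- Evaluation of a double sum of a function supported at one point. -/
lemma eval2 (s t : Finset ℕ) (a b : ℕ) (v : ℝ)
    (ha : a ∉ s → v = 0) (hb : b ∉ t → v = 0) :
    ∑ l ∈ t, ∑ k ∈ s, (if k = a then (if l = b then v else 0) else 0) = v := by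
  classical
  by_cases h1 : a ∈ s
  · by_cases h2 : b ∈ t
    · simp [Finset.sum_ite_eq', h1, h2]
    · simp [Finset.sum_ite_eq', h1, h2, hb h2]
  · simp [Finset.sum_ite_eq', h1, ha h1]

/-- the block tridiagonal matrix `M` of the discrete elliptic problem,
with weight `p` strictly positive on `[1,m]×[1,n]` and vanishing on the lines `i=0`
(for `j ∈ [1,n]`) and `j=0` (for `i ∈ [1,m]`), is positive definite:
`Xᵀ M X > 0` for every nonzero `X`. -/
theorem stmt_3 (m n : ℕ) (hm : 1 ≤ m) (hn : 1 ≤ n)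
    (p : ℕ → ℕ → ℝ) (hp : ∀ i j', 0 ≤ p i j')
    (hppos : ∀ i ∈ Finset.Icc 1 m, ∀ j' ∈ Finset.Icc 1 n, 0 < p i j')
    (hp0i : ∀ j' ∈ Finset.Icc 1 n, p 0 j' = 0)
    (hp0j : ∀ i ∈ Finset.Icc 1 m, p i 0 = 0)
    (Mat : ℕ → ℕ → ℕ → ℕ → ℝ)
    (hMat : ∀ i j' k l, Mat i j' k l =
      if j' = l then
        (if i = k then p (i - 1) j' + 2 * p i j' + p i (j' - 1)
         else if k = i + 1 then -p i j'
         else if i = k + 1 then -p k j'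
         else 0)
      else if l = j' + 1 ∧ i = k then -p i j'
      else if j' = l + 1 ∧ i = k then -p i l
      else 0)
    (x : ℕ → ℕ → ℝ)
    (hx : ∃ i ∈ Finset.Icc 1 m, ∃ j' ∈ Finset.Icc 1 n, x i j' ≠ 0) :
    0 < ∑ j' ∈ Finset.Icc 1 n, ∑ l ∈ Finset.Icc 1 n, ∑ i ∈ Finset.Icc 1 m,
        ∑ k ∈ Finset.Icc 1 m, x i j' * Mat i j' k l * x k l := by
  classical
  set Y : ℕ → ℕ → ℝ :=
    fun i j => if i ∈ Finset.Icc 1 m ∧ j ∈ Finset.Icc 1 n then x i j else 0 with hYdef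
  have hYx : ∀ i ∈ Finset.Icc 1 m, ∀ j ∈ Finset.Icc 1 n, Y i j = x i j := by
    intro i hi j hj
    show (if i ∈ Finset.Icc 1 m ∧ j ∈ Finset.Icc 1 n then x i j else 0) = x i j
    rw [if_pos ⟨hi, hj⟩]
  have hYout : ∀ i j, i ∉ Finset.Icc 1 m ∨ j ∉ Finset.Icc 1 n → Y i j = 0 := by
    intro i j hij
    show (if i ∈ Finset.Icc 1 m ∧ j ∈ Finset.Icc 1 n then x i j else 0) = 0
    rw [if_neg (by tauto)]
  -- Step 1: replace x by Y
  have step1 : ∑ j' ∈ Finset.Icc 1 n, ∑ l ∈ Finset.Icc 1 n, ∑ i ∈ Finset.Icc 1 m,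
        ∑ k ∈ Finset.Icc 1 m, x i j' * Mat i j' k l * x k l
      = ∑ j' ∈ Finset.Icc 1 n, ∑ i ∈ Finset.Icc 1 m, ∑ l ∈ Finset.Icc 1 n,
        ∑ k ∈ Finset.Icc 1 m, Y i j' * Mat i j' k l * Y k l := by
    refine Finset.sum_congr rfl fun j' hj' => ?_
    rw [Finset.sum_comm]
    refine Finset.sum_congr rfl fun i hi => Finset.sum_congr rfl fun l hl =>
      Finset.sum_congr rfl fun k hk => ?_
    rw [hYx i hi j' hj', hYx k hk l hl]
  -- Step 2: evaluate the inner double sums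
  have key : ∀ j' ∈ Finset.Icc 1 n, ∀ i ∈ Finset.Icc 1 m,
      ∑ l ∈ Finset.Icc 1 n, ∑ k ∈ Finset.Icc 1 m, Y i j' * Mat i j' k l * Y k l
        = ((p (i - 1) j' + p i j') * Y i j' ^ 2 - p i j' * Y i j' * Y (i + 1) j'
            - p (i - 1) j' * Y i j' * Y (i - 1) j')
          + ((p i (j' - 1) + p i j') * Y i j' ^ 2 - p i j' * Y i j' * Y i (j' + 1)
            - p i (j' - 1) * Y i j' * Y i (j' - 1)) := by
    intro j' hj'm i him
    have hj' := Finset.mem_Icc.mp hj'm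
    have hi := Finset.mem_Icc.mp him
    have hsum : ∀ l ∈ Finset.Icc 1 n, ∀ k ∈ Finset.Icc 1 m,
        Y i j' * Mat i j' k l * Y k l
          = (if k = i then (if l = j' then
                (p (i - 1) j' + 2 * p i j' + p i (j' - 1)) * Y i j' ^ 2 else 0) else 0)
          + (if k = i + 1 then (if l = j' then
                -(p i j' * (Y i j' * Y (i + 1) j')) else 0) else 0)
          + (if k = i - 1 then (if l = j' then
                -(p (i - 1) j' * (Y i j' * Y (i - 1) j')) else 0) else 0)
          + (if k = i then (if l = j' + 1 then
                -(p i j' * (Y i j' * Y i (j' + 1))) else 0) else 0)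
          + (if k = i then (if l = j' - 1 then
                -(p i (j' - 1) * (Y i j' * Y i (j' - 1))) else 0) else 0) := by
      intro l hlm k hkm
      have hl := Finset.mem_Icc.mp hlm
      have hk := Finset.mem_Icc.mp hkm
      rw [hMat]
      split_ifs <;>
        first
        | omega
        | (casesm* _ ∧ _ <;> subst_vars <;> (try simp only [Nat.add_sub_cancel]) <;> ring)
        | (exfalso; omega)
    rw [Finset.sum_congr rfl fun l hl => Finset.sum_congr rfl (hsum l hl)]
    simp only [Finset.sum_add_distrib]
    rw [eval2 (Finset.Icc 1 m) (Finset.Icc 1 n) i j'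
        ((p (i - 1) j' + 2 * p i j' + p i (j' - 1)) * Y i j' ^ 2)
        (fun h => absurd him h) (fun h => absurd hj'm h),
      eval2 (Finset.Icc 1 m) (Finset.Icc 1 n) (i + 1) j'
        (-(p i j' * (Y i j' * Y (i + 1) j')))
        (fun h => by rw [hYout (i + 1) j' (Or.inl h)]; ring)
        (fun h => absurd hj'm h),
      eval2 (Finset.Icc 1 m) (Finset.Icc 1 n) (i - 1) j'
        (-(p (i - 1) j' * (Y i j' * Y (i - 1) j')))
        (fun h => by
          have : i - 1 = 0 := by
            rcases Finset.mem_Icc.not.mp h with h'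
            omega
          rw [this, hp0i j' hj'm]; ring)
        (fun h => absurd hj'm h),
      eval2 (Finset.Icc 1 m) (Finset.Icc 1 n) i (j' + 1)
        (-(p i j' * (Y i j' * Y i (j' + 1))))
        (fun h => absurd him h)
        (fun h => by rw [hYout i (j' + 1) (Or.inr h)]; ring),
      eval2 (Finset.Icc 1 m) (Finset.Icc 1 n) i (j' - 1)
        (-(p i (j' - 1) * (Y i j' * Y i (j' - 1))))
        (fun h => absurd him h)
        (fun h => by
          have : j' - 1 = 0 := by
            rcases Finset.mem_Icc.not.mp h with h'
            omega
          rw [this, hp0j i him]; ring)]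
    ring
  rw [step1, Finset.sum_congr rfl fun j' hj' =>
    Finset.sum_congr rfl fun i hi => key j' hj' i hi]
  simp only [Finset.sum_add_distrib]
  -- horizontal part
  have hH : ∑ j' ∈ Finset.Icc 1 n, ∑ i ∈ Finset.Icc 1 m,
        ((p (i - 1) j' + p i j') * Y i j' ^ 2 - p i j' * Y i j' * Y (i + 1) j'
          - p (i - 1) j' * Y i j' * Y (i - 1) j')
      = ∑ j' ∈ Finset.Icc 1 n, ∑ i ∈ Finset.Icc 1 m,
          p i j' * (Y (i + 1) j' - Y i j') ^ 2 := by
    refine Finset.sum_congr rfl fun j' hj' => ?_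
    exact oneD_sq m (fun i => p i j') (fun i => Y i j') (hp0i j' hj')
      (hYout (m + 1) j' (Or.inl (by simp)))
  -- vertical part
  have hV : ∑ j' ∈ Finset.Icc 1 n, ∑ i ∈ Finset.Icc 1 m,
        ((p i (j' - 1) + p i j') * Y i j' ^ 2 - p i j' * Y i j' * Y i (j' + 1)
          - p i (j' - 1) * Y i j' * Y i (j' - 1))
      = ∑ i ∈ Finset.Icc 1 m, ∑ j' ∈ Finset.Icc 1 n,
          p i j' * (Y i (j' + 1) - Y i j') ^ 2 := by
    rw [Finset.sum_comm]
    refine Finset.sum_congr rfl fun i hi => ?_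
    exact oneD_sq n (fun j => p i j) (fun j => Y i j) (hp0j i hi)
      (hYout i (n + 1) (Or.inr (by simp)))
  rw [hH, hV]
  -- positivity
  obtain ⟨i0, hi0, j0, hj0, hx0⟩ := hx
  have hA : 0 ≤ ∑ j' ∈ Finset.Icc 1 n, ∑ i ∈ Finset.Icc 1 m,
      p i j' * (Y (i + 1) j' - Y i j') ^ 2 := by
    refine Finset.sum_nonneg fun j' _ => Finset.sum_nonneg fun i _ => ?_
    exact mul_nonneg (hp _ _) (sq_nonneg _)
  have hY0 : Y i0 j0 ≠ 0 := by rw [hYx i0 hi0 j0 hj0]; exact hx0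
  have hex : ∃ j1 ∈ Finset.Icc 1 n, Y i0 (j1 + 1) ≠ Y i0 j1 := by
    by_contra hcon
    push_neg at hcon
    have hj0' := Finset.mem_Icc.mp hj0
    have hstep : ∀ j, j0 ≤ j → j ≤ n + 1 → Y i0 j = Y i0 j0 := by
      intro j hj
      induction j, hj using Nat.le_induction with
      | base => intro _; rfl
      | succ j hj ih =>
        intro hjn
        have hjm : j ∈ Finset.Icc 1 n := Finset.mem_Icc.mpr ⟨by omega, by omega⟩
        rw [hcon j hjm, ih (by omega)]
    have h1 : Y i0 (n + 1) = Y i0 j0 := hstep (n + 1) (by omega) le_rfl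
    have h2 : Y i0 (n + 1) = 0 := hYout i0 (n + 1) (Or.inr (by simp))
    exact hY0 (h2 ▸ h1.symm)
  obtain ⟨j1, hj1, hj1ne⟩ := hex
  have hB : 0 < ∑ i ∈ Finset.Icc 1 m, ∑ j' ∈ Finset.Icc 1 n,
      p i j' * (Y i (j' + 1) - Y i j') ^ 2 := by
    refine Finset.sum_pos'
      (fun i _ => Finset.sum_nonneg fun j' _ => mul_nonneg (hp _ _) (sq_nonneg _))
      ⟨i0, hi0, ?_⟩
    refine Finset.sum_pos' (fun j' _ => mul_nonneg (hp _ _) (sq_nonneg _)) ⟨j1, hj1, ?_⟩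
    have hd : Y i0 (j1 + 1) - Y i0 j1 ≠ 0 := sub_ne_zero.mpr hj1ne
    exact mul_pos (hppos i0 hi0 j1 hj1) ((sq_nonneg _).lt_of_ne' (pow_ne_zero 2 hd))
  linarith
end
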